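/- For k = 0,1,2,3 let h_k = ∏_{i=1}^{3-k}(3s₁+2s₂+i) · ∏_{j=1}^{k}(s₂+j) in ℚ[s₁,s₂], and let J be the ideal generated by h₀, h₁, h₂, h₃. Then (L+2/3)(L+1)(L+4/3) ∈ J, where L = s₁+s₂, and moreover every nonzero b ∈ ℚ[t] with b(s₁+s₂) ∈ J is divisible by (t+2/3)(t+1)(t+4/3). -/
import Mathlib

open MvPolynomial

/-- `h_k = ∏_{i=1}^{3-k}(3s₁+2s₂+i) · ∏_{j=1}^{k}(s₂+j)` in `ℚ[s₁,s₂]`. -/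
noncomputable def h (k : Fin 4) : MvPolynomial (Fin 2) ℚ :=
  (∏ i ∈ Finset.Icc 1 (3 - k.val), (3 * X 0 + 2 * X 1 + (i : MvPolynomial (Fin 2) ℚ))) *
  (∏ j ∈ Finset.Icc 1 k.val, (X 1 + (j : MvPolynomial (Fin 2) ℚ)))

/-- The ideal generated by `h₀, h₁, h₂, h₃`. -/
noncomputable def J₁ : Ideal (MvPolynomial (Fin 2) ℚ) :=
  Ideal.span {p | ∃ k : Fin 4, p = h k}

lemma h0_eq : h 0 = (3*X 0+2*X 1+1)*(3*X 0+2*X 1+2)*(3*X 0+2*X 1+3) := by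
  rw [h, show Finset.Icc 1 (3 - (0:Fin 4).val) = {1,2,3} from rfl,
    show Finset.Icc 1 (0:Fin 4).val = ∅ from rfl]
  simp [Finset.prod_insert, Finset.prod_singleton]
  try push_cast
  try ring
lemma h1_eq : h 1 = (3*X 0+2*X 1+1)*(3*X 0+2*X 1+2)*(X 1+1) := by
  rw [h, show Finset.Icc 1 (3 - (1:Fin 4).val) = {1,2} from rfl,
    show Finset.Icc 1 (1:Fin 4).val = {1} from rfl]
  simp [Finset.prod_insert, Finset.prod_singleton]
  try push_cast
  try ring
lemma h2_eq : h 2 = (3*X 0+2*X 1+1)*((X 1+1)*(X 1+2)) := by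
  rw [h, show Finset.Icc 1 (3 - (2:Fin 4).val) = {1} from rfl,
    show Finset.Icc 1 (2:Fin 4).val = {1,2} from rfl]
  simp [Finset.prod_insert, Finset.prod_singleton]
  try push_cast
  try ring
lemma h3_eq : h 3 = (X 1+1)*((X 1+2)*(X 1+3)) := by
  rw [h, show Finset.Icc 1 (3 - (3:Fin 4).val) = ∅ from rfl,
    show Finset.Icc 1 (3:Fin 4).val = {1,2,3} from rfl]
  simp [Finset.prod_insert, Finset.prod_singleton]
  try push_cast
  try ring

lemma h_mem (k : Fin 4) : h k ∈ J₁ := Ideal.subset_span ⟨k, rfl⟩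

lemma key_identity :
    C (27:ℚ) * ((X 0 + X 1 + C (2/3 : ℚ)) * (X 0 + X 1 + 1) * (X 0 + X 1 + C (4/3 : ℚ)))
      = h 0 + 3 * h 1 + 3 * h 2 + h 3 := by
  have k1 : (3 : MvPolynomial (Fin 2) ℚ) * C (2/3 : ℚ) = 2 := by
    rw [show (3 : MvPolynomial (Fin 2) ℚ) = C (3:ℚ) from (map_ofNat C 3).symm, ← C_mul,
      show (3:ℚ) * (2/3) = 2 by norm_num]
    exact map_ofNat C 2
  have k2 : (3 : MvPolynomial (Fin 2) ℚ) * C (4/3 : ℚ) = 4 := by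
    rw [show (3 : MvPolynomial (Fin 2) ℚ) = C (3:ℚ) from (map_ofNat C 3).symm, ← C_mul,
      show (3:ℚ) * (4/3) = 4 by norm_num]
    exact map_ofNat C 4
  have c27 : (C (27:ℚ) : MvPolynomial (Fin 2) ℚ) = 27 := map_ofNat C 27
  rw [h0_eq, h1_eq, h2_eq, h3_eq, c27]
  linear_combination (9*(X 0 + X 1 + 1)*(X 0 + X 1 + C (4/3:ℚ))) * k1
    + (3*(3*X 0+3*X 1+2)*(X 0+X 1+1)) * k2

lemma mem_part :
    (X 0 + X 1 + C (2/3 : ℚ)) * (X 0 + X 1 + 1) * (X 0 + X 1 + C (4/3 : ℚ)) ∈ J₁ := by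
  have hs : h 0 + 3 * h 1 + 3 * h 2 + h 3 ∈ J₁ := by
    apply Ideal.add_mem _ (Ideal.add_mem _ (Ideal.add_mem _ (h_mem 0)
      (Ideal.mul_mem_left _ _ (h_mem 1))) (Ideal.mul_mem_left _ _ (h_mem 2))) (h_mem 3)
  have := Ideal.mul_mem_left _ (C (1/27 : ℚ)) hs
  rwa [← key_identity, ← mul_assoc, ← C_mul, show (1/27 : ℚ) * 27 = 1 by norm_num,
    C_1, one_mul] at this

lemma eval_h_zero (s₁ : ℚ) (H : (3*s₁ - 1) * (3*s₁) * (3*s₁ + 1) = 0) (k : Fin 4) :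
    eval ![s₁, (-1:ℚ)] (h k) = 0 := by
  fin_cases k
  · show eval ![s₁, (-1:ℚ)] (h 0) = 0
    rw [h0_eq]
    simp only [map_mul, map_add, map_ofNat, map_one, eval_X, Matrix.cons_val_zero,
      Matrix.cons_val_one, Matrix.head_cons]
    linear_combination H
  · show eval ![s₁, (-1:ℚ)] (h 1) = 0
    rw [h1_eq]; simp
  · show eval ![s₁, (-1:ℚ)] (h 2) = 0
    rw [h2_eq]; simp
  · show eval ![s₁, (-1:ℚ)] (h 3) = 0
    rw [h3_eq]; simp

lemma eval_J (v : Fin 2 → ℚ) (hv : ∀ k, eval v (h k) = 0) {p : MvPolynomial (Fin 2) ℚ}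
    (hp : p ∈ J₁) : eval v p = 0 := by
  have hle : J₁ ≤ RingHom.ker (eval v) := by
    rw [J₁, Ideal.span_le]
    rintro q ⟨k, rfl⟩
    exact hv k
  exact hle hp

lemma root_of_mem (b : Polynomial ℚ)
    (hb : Polynomial.aeval (X 0 + X 1 : MvPolynomial (Fin 2) ℚ) b ∈ J₁)
    (s₁ : ℚ) (H : (3*s₁ - 1) * (3*s₁) * (3*s₁ + 1) = 0) :
    b.eval (s₁ - 1) = 0 := by
  have h0 := eval_J ![s₁, -1] (eval_h_zero s₁ H) hb
  have : (MvPolynomial.aeval ![s₁, (-1:ℚ)])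
      (Polynomial.aeval (X 0 + X 1 : MvPolynomial (Fin 2) ℚ) b)
      = Polynomial.aeval ((MvPolynomial.aeval ![s₁, (-1:ℚ)]) (X 0 + X 1 : MvPolynomial (Fin 2) ℚ)) b :=
    (Polynomial.aeval_algHom_apply _ _ _).symm
  rw [MvPolynomial.aeval_def, eval₂_eq_eval_map, Algebra.algebraMap_self, map_id] at this
  rw [this] at h0
  simpa [Polynomial.coe_aeval_eq_eval, sub_eq_add_neg] using h0

theorem stmt_7 :
    ((X 0 + X 1 + C (2/3 : ℚ)) * (X 0 + X 1 + 1) * (X 0 + X 1 + C (4/3 : ℚ)) ∈ J₁) ∧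
    (∀ b : Polynomial ℚ, b ≠ 0 →
      Polynomial.aeval (X 0 + X 1 : MvPolynomial (Fin 2) ℚ) b ∈ J₁ →
      (Polynomial.X + Polynomial.C (2/3 : ℚ)) * (Polynomial.X + 1) *
        (Polynomial.X + Polynomial.C (4/3 : ℚ)) ∣ b) := by
  constructor
  · exact mem_part
  · intro b _ hb
    have r1 : b.eval (-(2/3) : ℚ) = 0 := by
      have := root_of_mem b hb (1/3) (by norm_num)
      convert this using 2
      norm_num
    have r2 : b.eval (-1 : ℚ) = 0 := by
      have := root_of_mem b hb 0 (by norm_num)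
      convert this using 2
      norm_num
    have r3 : b.eval (-(4/3) : ℚ) = 0 := by
      have := root_of_mem b hb (-(1/3)) (by norm_num)
      convert this using 2
      norm_num
    have d1 : Polynomial.X + Polynomial.C (2/3 : ℚ) ∣ b := by
      have := (Polynomial.dvd_iff_isRoot (p := b) (a := (-(2/3) : ℚ))).mpr r1
      simpa [sub_eq_add_neg] using this
    have d2 : Polynomial.X + 1 ∣ b := by
      have := (Polynomial.dvd_iff_isRoot (p := b) (a := (-1 : ℚ))).mpr r2
      simpa [sub_eq_add_neg] using this
    have d3 : Polynomial.X + Polynomial.C (4/3 : ℚ) ∣ b := by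
      have := (Polynomial.dvd_iff_isRoot (p := b) (a := (-(4/3) : ℚ))).mpr r3
      simpa [sub_eq_add_neg] using this
    have cop12 : IsCoprime (Polynomial.X + Polynomial.C (2/3 : ℚ)) (Polynomial.X + 1) := by
      have : IsCoprime (Polynomial.X - Polynomial.C (-(2/3) : ℚ))
          (Polynomial.X - Polynomial.C (-1 : ℚ)) :=
        Polynomial.isCoprime_X_sub_C_of_isUnit_sub (by norm_num)
      simpa [sub_eq_add_neg] using this
    have cop13 : IsCoprime (Polynomial.X + Polynomial.C (2/3 : ℚ))
        (Polynomial.X + Polynomial.C (4/3 : ℚ)) := by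
      have : IsCoprime (Polynomial.X - Polynomial.C (-(2/3) : ℚ))
          (Polynomial.X - Polynomial.C (-(4/3) : ℚ)) :=
        Polynomial.isCoprime_X_sub_C_of_isUnit_sub (by norm_num)
      simpa [sub_eq_add_neg] using this
    have cop23 : IsCoprime (Polynomial.X + 1)
        (Polynomial.X + Polynomial.C (4/3 : ℚ)) := by
      have : IsCoprime (Polynomial.X - Polynomial.C (-1 : ℚ))
          (Polynomial.X - Polynomial.C (-(4/3) : ℚ)) :=
        Polynomial.isCoprime_X_sub_C_of_isUnit_sub (by norm_num)
      simpa [sub_eq_add_neg] using this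
    exact (cop13.mul_left cop23).mul_dvd (cop12.mul_dvd d1 d2) d3
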